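/- Let x : [n] → [c] be a token sequence with x_k = k for all k ≤ c, let π ∈ ℝ^c have strictly positive entries, let f : [c] → 2^{[c]} satisfy f(x) ≠ ∅ for all x, let V = {v_k}_{k=1}^n be a good sequence in ℝ^d converging to Z = {z_x}_{x∈[c]} with parameter γ, and let A be a nice attention map with parameter ψ that reflects f. Set N = max_{y∈[c]} ‖z_y‖, F_{y,k} = #{j ≤ k : x_j = y}, and R_k(x) = Σ_{y'∈f(x)} F_{y',k}. Suppose there is β > 0 such that for all k ∈ [n], all x ∈ [c] and all y ∈ f(x): |F_{y,k}/R_k(x) − π_y/(Σ_{y'∈f(x)} π_{y'})| ≤ β/√k. Then AV is a good sequence converging to Z' = { (Σ_{y∈f(x)} π_y z_y) / (Σ_{y∈f(x)} π_y) }_{x∈[c]} with parameter 2ψγ + Ncψ + Ncβ + (c+1)²ψ(γ + N). -/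

import Mathlib

/-!
Split `(AV)_k - z'_{x_k}` as `∑ⱼ a_{k,j} (v_j - z_{x_j}) + ∑_{y ∈ f(x_k)} (w_y - p_y) z_y`, where
`w_y` is the attention mass row `k` puts on occurrences of `y` and `p_y = π_y / ∑_{y' ∈ f(x_k)} π_{y'}`;
for `k > c` this is exact because, by reflection (i), row `k` only charges tokens in `f(x_k)`.
Niceness of `A` lets Abel summation dominate the first sum by `(ψ/k) ∑_{j ≤ k} γ/√j ≤ 2ψγ/√k`.
Reflection (ii) and the frequency hypothesis give `|w_y - p_y| ≤ (ψ + β)/√k`, so the second sum is at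
most `Nc(ψ + β)/√k`. For `k ≤ c` both `(AV)_k` and `z'_{x_k}` are convex combinations of vectors
of norm at most `γ + N`, and `2(γ + N) ≤ (c+1)²ψ(γ + N)/√k` since `√k ≤ c` and `ψ ≥ 1`.
-/

open Finset

lemma sum_Icc_one_div_sqrt_le (k : ℕ) : ∑ j ∈ Icc 1 k, 1 / √(j : ℝ) ≤ 2 * √(k : ℝ) := by
  induction k with
  | zero => simp
  | succ m ih =>
    rw [sum_Icc_succ_top (by omega), Nat.cast_succ]
    have hm : √(m : ℝ) ^ 2 = m := Real.sq_sqrt m.cast_nonneg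
    have hm1 : √((m : ℝ) + 1) ^ 2 = m + 1 := Real.sq_sqrt (by positivity)
    have hpos : 0 < √((m : ℝ) + 1) := Real.sqrt_pos.mpr (by positivity)
    have hstep : 1 / √((m : ℝ) + 1) ≤ 2 * √((m : ℝ) + 1) - 2 * √(m : ℝ) := by
      rw [div_le_iff₀ hpos]
      nlinarith [sq_nonneg (√(m : ℝ) - √((m : ℝ) + 1)), Real.sqrt_nonneg (m : ℝ)]
    linarith

lemma sum_mul_le_add_of_partial_sum_le {a g : ℕ → ℝ} {C : ℝ}
    (hg : ∀ j, 1 ≤ j → g (j + 1) ≤ g j) :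
    ∀ m, (∀ j ∈ Icc 1 m, ∑ i ∈ Icc 1 j, a i ≤ C * j) →
      ∑ j ∈ Icc 1 m, a j * g j ≤
        C * ∑ j ∈ Icc 1 m, g j + (∑ i ∈ Icc 1 m, a i - C * m) * g m := by
  intro m
  induction m with
  | zero => simp
  | succ m ih =>
    intro ha
    rw [sum_Icc_succ_top (by omega), sum_Icc_succ_top (by omega), sum_Icc_succ_top (by omega)]
    have ih' := ih fun j hj => ha j (Icc_subset_Icc_right m.le_succ hj)
    have hboundary : (∑ i ∈ Icc 1 m, a i - C * m) * g m ≤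
        (∑ i ∈ Icc 1 m, a i - C * m) * g (m + 1) := by
      rcases Nat.eq_zero_or_pos m with rfl | hm
      · simp
      · have := ha m (mem_Icc.mpr ⟨hm, m.le_succ⟩)
        exact mul_le_mul_of_nonpos_left (hg m hm) (by linarith)
    push_cast
    linarith

lemma sum_mul_le_of_partial_sum_le {a g : ℕ → ℝ} {C : ℝ} {m : ℕ}
    (hg : ∀ j, 1 ≤ j → g (j + 1) ≤ g j) (hgm : 0 ≤ g m)
    (ha : ∀ j ∈ Icc 1 m, ∑ i ∈ Icc 1 j, a i ≤ C * j) :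
    ∑ j ∈ Icc 1 m, a j * g j ≤ C * ∑ j ∈ Icc 1 m, g j := by
  have hboundary : (∑ i ∈ Icc 1 m, a i - C * m) * g m ≤ 0 := by
    rcases Nat.eq_zero_or_pos m with rfl | hm
    · simp
    · exact mul_nonpos_of_nonpos_of_nonneg (by linarith [ha m (right_mem_Icc.mpr hm)]) hgm
  linarith [sum_mul_le_add_of_partial_sum_le hg m ha]

section Normed

variable {E : Type*} [SeminormedAddCommGroup E] [NormedSpace ℝ E]

lemma norm_sum_smul_le_of_partial_sum_le {a : ℕ → ℝ} {e : ℕ → E} {k : ℕ} {ψ γ : ℝ}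
    (hψ : 0 ≤ ψ) (hγ : 0 ≤ γ) (ha : ∀ j ∈ Icc 1 k, 0 ≤ a j)
    (hpart : ∀ j ∈ Icc 1 k, ∑ i ∈ Icc 1 j, a i ≤ ψ * j / k)
    (he : ∀ j ∈ Icc 1 k, ‖e j‖ ≤ γ / √(j : ℝ)) :
    ‖∑ j ∈ Icc 1 k, a j • e j‖ ≤ 2 * ψ * γ / √(k : ℝ) := by
  have hg : ∀ j, 1 ≤ j → γ / √((j + 1 : ℕ) : ℝ) ≤ γ / √(j : ℝ) := fun j hj =>
    div_le_div_of_nonneg_left hγ (Real.sqrt_pos.mpr (by exact_mod_cast hj))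
      (Real.sqrt_le_sqrt (by push_cast; linarith))
  have habel := sum_mul_le_of_partial_sum_le (a := a) (g := fun j => γ / √(j : ℝ)) (C := ψ / k) hg
    (div_nonneg hγ (Real.sqrt_nonneg _))
    fun j hj => (hpart j hj).trans_eq (by ring)
  calc ‖∑ j ∈ Icc 1 k, a j • e j‖
      ≤ ∑ j ∈ Icc 1 k, a j * (γ / √(j : ℝ)) := by
        refine (norm_sum_le _ _).trans (sum_le_sum fun j hj => ?_)
        rw [norm_smul, Real.norm_of_nonneg (ha j hj)]
        exact mul_le_mul_of_nonneg_left (he j hj) (ha j hj)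
    _ ≤ ψ / k * ∑ j ∈ Icc 1 k, γ / √(j : ℝ) := habel
    _ = ψ / k * γ * ∑ j ∈ Icc 1 k, 1 / √(j : ℝ) := by
        simp only [mul_sum, mul_one_div, mul_div_assoc]
    _ ≤ ψ / k * γ * (2 * √(k : ℝ)) :=
        mul_le_mul_of_nonneg_left (sum_Icc_one_div_sqrt_le k) (by positivity)
    _ = 2 * ψ * γ / √(k : ℝ) := by
        rcases Nat.eq_zero_or_pos k with rfl | hk
        · simp
        · have hs : 0 < √(k : ℝ) := Real.sqrt_pos.mpr (by exact_mod_cast hk)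
          have := Real.sq_sqrt (Nat.cast_nonneg (α := ℝ) k)
          field_simp
          linear_combination ψ * γ * this

lemma sum_smul_comp_eq_sum_fiberwise {ι κ : Type*} [DecidableEq κ] {s : Finset ι}
    {t : Finset κ} {a : ι → ℝ} {x : ι → κ} (z : κ → E) (h : ∀ j ∈ s, a j ≠ 0 → x j ∈ t) :
    ∑ j ∈ s, a j • z (x j) = ∑ y ∈ t, (∑ j ∈ s with x j = y, a j) • z y := by
  calc ∑ j ∈ s, a j • z (x j)
      = ∑ j ∈ s with x j ∈ t, a j • z (x j) :=
        (sum_filter_of_ne fun j hj hne => h j hj fun h0 => hne (by simp [h0])).symm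
    _ = ∑ y ∈ t, ∑ j ∈ s with x j = y, a j • z (x j) := (sum_fiberwise_eq_sum_filter ..).symm
    _ = ∑ y ∈ t, (∑ j ∈ s with x j = y, a j) • z y := by
        refine sum_congr rfl fun y _ => ?_
        rw [sum_smul]
        exact sum_congr rfl fun j hj => by rw [(mem_filter.mp hj).2]

lemma norm_sum_smul_sub_centerMass_le {κ : Type*} {t : Finset κ} {w π : κ → ℝ} {z : κ → E}
    {ε N : ℝ} (hw : ∀ y ∈ t, |w y - π y / ∑ y' ∈ t, π y'| ≤ ε) (hz : ∀ y ∈ t, ‖z y‖ ≤ N) :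
    ‖∑ y ∈ t, w y • z y - t.centerMass π z‖ ≤ #t * (ε * N) := by
  have hdiff : ∑ y ∈ t, w y • z y - t.centerMass π z =
      ∑ y ∈ t, (w y - π y / ∑ y' ∈ t, π y') • z y := by
    simp only [centerMass, smul_sum, smul_smul, sub_smul, sum_sub_distrib, inv_mul_eq_div]
  rw [hdiff, ← nsmul_eq_mul]
  refine (norm_sum_le _ _).trans (sum_le_card_nsmul _ _ _ fun y hy => ?_)
  rw [norm_smul, Real.norm_eq_abs]
  exact mul_le_mul (hw y hy) (hz y hy) (norm_nonneg _) ((abs_nonneg _).trans (hw y hy))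

lemma norm_sum_smul_sub_centerMass_le_of_partial_sum_le {κ : Type*} [DecidableEq κ]
    {a : ℕ → ℝ} {x : ℕ → κ} {t : Finset κ} {π : κ → ℝ} {v : ℕ → E} {z : κ → E} {k : ℕ}
    {ψ γ ε N : ℝ} (hψ : 0 ≤ ψ) (hγ : 0 ≤ γ) (ha : ∀ j ∈ Icc 1 k, 0 ≤ a j)
    (hpart : ∀ j ∈ Icc 1 k, ∑ i ∈ Icc 1 j, a i ≤ ψ * j / k)
    (hsupp : ∀ j ∈ Icc 1 k, a j ≠ 0 → x j ∈ t)
    (hw : ∀ y ∈ t, |∑ j ∈ Icc 1 k with x j = y, a j - π y / ∑ y' ∈ t, π y'| ≤ ε)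
    (hv : ∀ j ∈ Icc 1 k, ‖v j - z (x j)‖ ≤ γ / √(j : ℝ)) (hz : ∀ y ∈ t, ‖z y‖ ≤ N) :
    ‖∑ j ∈ Icc 1 k, a j • v j - t.centerMass π z‖ ≤ 2 * ψ * γ / √(k : ℝ) + #t * (ε * N) := by
  have hsplit : ∑ j ∈ Icc 1 k, a j • v j - t.centerMass π z =
      ∑ j ∈ Icc 1 k, a j • (v j - z (x j)) +
        (∑ y ∈ t, (∑ j ∈ Icc 1 k with x j = y, a j) • z y - t.centerMass π z) := by
    rw [← sum_smul_comp_eq_sum_fiberwise z hsupp]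
    simp only [smul_sub, sum_sub_distrib]
    abel
  rw [hsplit]
  exact (norm_add_le _ _).trans (add_le_add
    (norm_sum_smul_le_of_partial_sum_le hψ hγ ha hpart hv) (norm_sum_smul_sub_centerMass_le hw hz))

lemma norm_sum_smul_sub_centerMass_le_add {ι κ : Type*} {s : Finset ι} {t : Finset κ}
    {a : ι → ℝ} {v : ι → E} {π : κ → ℝ} {z : κ → E} {B N : ℝ}
    (ha₀ : ∀ j ∈ s, 0 ≤ a j) (ha₁ : ∑ j ∈ s, a j = 1) (hv : ∀ j ∈ s, ‖v j‖ ≤ B)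
    (hπ : ∀ y ∈ t, 0 < π y) (ht : t.Nonempty) (hz : ∀ y ∈ t, ‖z y‖ ≤ N) :
    ‖∑ j ∈ s, a j • v j - t.centerMass π z‖ ≤ B + N := by
  have hav : ∑ j ∈ s, a j • v j ∈ Metric.closedBall 0 B :=
    (convex_closedBall 0 B).sum_mem ha₀ ha₁ fun j hj => mem_closedBall_zero_iff.mpr (hv j hj)
  have hcm : t.centerMass π z ∈ Metric.closedBall 0 N :=
    (convex_closedBall 0 N).centerMass_mem (fun y hy => (hπ y hy).le) (sum_pos hπ ht)
      fun y hy => mem_closedBall_zero_iff.mpr (hz y hy)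
  rw [mem_closedBall_zero_iff] at hav hcm
  exact (norm_sub_le _ _).trans (add_le_add hav hcm)

end Normed

lemma two_mul_le_sq_add_one_mul_div_sqrt {k c : ℕ} {ψ M : ℝ} (hk : 1 ≤ k) (hkc : k ≤ c)
    (hψ : 1 ≤ ψ) (hM : 0 ≤ M) : 2 * M ≤ (c + 1) ^ 2 * ψ * M / √(k : ℝ) := by
  have hk' : (1 : ℝ) ≤ k := by exact_mod_cast hk
  have hsqrt : √(k : ℝ) ≤ c :=
    (Real.sqrt_le_left (by positivity)).mpr (by norm_cast; nlinarith)
  rw [le_div_iff₀ (Real.sqrt_pos.mpr (by positivity))]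
  nlinarith [sq_nonneg ((c : ℝ) - 1), mul_nonneg hM (sq_nonneg ((c : ℝ) + 1)),
    Real.sqrt_nonneg (k : ℝ)]

theorem attention_reflecting_setvalued_good_sequence_general
    (n c d : ℕ) (hc : 1 ≤ c)
    (x : ℕ → ℕ) (hx : ∀ k ∈ Icc 1 n, x k ∈ Icc 1 c)
    (π : ℕ → ℝ) (hπ : ∀ y ∈ Icc 1 c, 0 < π y)
    (f : ℕ → Finset ℕ)
    (hf_sub : ∀ y ∈ Icc 1 c, f y ⊆ Icc 1 c)
    (hf_ne : ∀ y ∈ Icc 1 c, (f y).Nonempty)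
    (v z : ℕ → EuclideanSpace ℝ (Fin d)) (γ ψ N β : ℝ)
    (hγ : 0 < γ) (hβ : 0 < β)
    (hN : N = (Icc 1 c).sup' (Finset.nonempty_Icc.mpr hc) (fun y => ‖z y‖))
    (A : ℕ → ℕ → ℝ)
    (hA_nonneg : ∀ k j, 0 ≤ A k j)
    (hA_row : ∀ k ∈ Icc 1 n, ∑ j ∈ Icc 1 k, A k j = 1)
    (hA_nice : ∀ k ∈ Icc 1 n, ∀ j ∈ Icc 1 k,
      ∑ i ∈ Icc 1 j, A k i ≤ ψ * j / k)
    (hrefl1 : ∀ k ∈ Icc 1 n, c < k → ∀ j ∈ Icc 1 k, 0 < A k j → x j ∈ f (x k))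
    (hrefl2 : ∀ k ∈ Icc 1 n, ∀ y ∈ f (x k),
      |(∑ j ∈ (Icc 1 k).filter (fun j => x j = y), A k j) -
          (((Icc 1 k).filter (fun j => x j = y)).card : ℝ) /
            ∑ y' ∈ f (x k), (((Icc 1 k).filter (fun j => x j = y')).card : ℝ)|
        ≤ ψ / Real.sqrt k)
    (hfreq : ∀ k ∈ Icc 1 n, ∀ x' ∈ Icc 1 c, ∀ y ∈ f x',
      |(((Icc 1 k).filter (fun j => x j = y)).card : ℝ) /
          (∑ y' ∈ f x', (((Icc 1 k).filter (fun j => x j = y')).card : ℝ)) -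
          π y / ∑ y' ∈ f x', π y'|
        ≤ β / Real.sqrt k)
    (hgood : ∀ k ∈ Icc 1 n, ‖v k - z (x k)‖ ≤ γ / Real.sqrt k) :
    ∀ k ∈ Icc 1 n,
      ‖(∑ j ∈ Icc 1 k, A k j • v j) -
          (∑ y ∈ f (x k), π y)⁻¹ • ∑ y ∈ f (x k), π y • z y‖ ≤
        (2 * ψ * γ + N * c * ψ + N * c * β + (c + 1) ^ 2 * ψ * (γ + N)) /
          Real.sqrt k := by
  intro k hk
  obtain ⟨hk1, hkn⟩ := mem_Icc.mp hk
  have hxk := hx k hk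
  have hIcc : ∀ j ∈ Icc 1 k, j ∈ Icc 1 n := fun j hj => Icc_subset_Icc_right hkn hj
  have hzN : ∀ y ∈ Icc 1 c, ‖z y‖ ≤ N := fun y hy => hN ▸ le_sup' (fun y => ‖z y‖) hy
  have hN0 : 0 ≤ N := (norm_nonneg _).trans (hzN _ hxk)
  have hψ : 1 ≤ ψ := by
    have hk0 : (k : ℝ) ≠ 0 := by positivity
    simpa [hA_row k hk, hk0] using hA_nice k hk k (right_mem_Icc.mpr hk1)
  have hψ0 : 0 ≤ ψ := zero_le_one.trans hψ
  have hsk : 0 < √(k : ℝ) := Real.sqrt_pos.mpr (by positivity)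
  change ‖_ - (f (x k)).centerMass π z‖ ≤ _
  rcases le_or_gt k c with hkc | hck
  · have hv : ∀ j ∈ Icc 1 k, ‖v j‖ ≤ γ + N := fun j hj => by
      have hj1 : (1 : ℝ) ≤ j := by exact_mod_cast (mem_Icc.mp hj).1
      have := (hgood j (hIcc j hj)).trans (div_le_self hγ.le (Real.one_le_sqrt.mpr hj1))
      linarith [norm_le_insert' (v j) (z (x j)), hzN _ (hx j (hIcc j hj))]
    calc _ ≤ γ + N + N := norm_sum_smul_sub_centerMass_le_add (fun j _ => hA_nonneg k j)
          (hA_row k hk) hv (fun y hy => hπ y (hf_sub _ hxk hy)) (hf_ne _ hxk)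
          fun y hy => hzN y (hf_sub _ hxk hy)
      _ ≤ 2 * (γ + N) := by linarith
      _ ≤ (c + 1) ^ 2 * ψ * (γ + N) / √(k : ℝ) :=
          two_mul_le_sq_add_one_mul_div_sqrt hk1 hkc hψ (by positivity)
      _ ≤ _ := div_le_div_of_nonneg_right (le_add_of_nonneg_left (by positivity)) hsk.le
  · have hrow := norm_sum_smul_sub_centerMass_le_of_partial_sum_le (ε := (ψ + β) / √(k : ℝ))
      hψ0 hγ.le (fun j _ => hA_nonneg k j) (hA_nice k hk)
      (fun j hj h0 => hrefl1 k hk hck j hj ((hA_nonneg k j).lt_of_ne' h0))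
      (fun y hy => (abs_sub_le _ _ _).trans ((add_le_add (hrefl2 k hk y hy)
        (hfreq k hk _ hxk y hy)).trans_eq (add_div _ _ _).symm))
      (fun j hj => hgood j (hIcc j hj)) fun y hy => hzN y (hf_sub _ hxk hy)
    have hcard : (#(f (x k)) : ℝ) ≤ c := by
      exact_mod_cast (card_le_card (hf_sub _ hxk)).trans_eq (by simp)
    calc _ ≤ 2 * ψ * γ / √(k : ℝ) + c * ((ψ + β) / √(k : ℝ) * N) := hrow.trans (by gcongr)
      _ = (2 * ψ * γ + N * c * ψ + N * c * β) / √(k : ℝ) := by ring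
      _ ≤ _ := div_le_div_of_nonneg_right (le_add_of_nonneg_right (by positivity)) hsk.le

/-- Context-wise convergence: if the token frequencies are
close to the stationary distribution `π` (at rate `β/√k`), then applying a nice
attention map reflecting `f` to a good sequence yields a good sequence
converging to `z'_x = (∑_{y ∈ f(x)} π_y z_y)/(∑_{y ∈ f(x)} π_y)` with parameter
`2ψγ + Ncψ + Ncβ + (c+1)²ψ(γ+N)`. -/
theorem attention_reflecting_setvalued_good_sequence
    (n c d : ℕ) (hc : 1 ≤ c) (hcn : c ≤ n)
    (x : ℕ → ℕ) (hx : ∀ k ∈ Icc 1 n, x k ∈ Icc 1 c)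
    (hx_init : ∀ k ∈ Icc 1 c, x k = k)
    (π : ℕ → ℝ) (hπ : ∀ y ∈ Icc 1 c, 0 < π y)
    (f : ℕ → Finset ℕ)
    (hf_sub : ∀ y ∈ Icc 1 c, f y ⊆ Icc 1 c)
    (hf_ne : ∀ y ∈ Icc 1 c, (f y).Nonempty)
    (v z : ℕ → EuclideanSpace ℝ (Fin d)) (γ ψ N β : ℝ)
    (hγ : 0 < γ) (hψ : 0 < ψ) (hβ : 0 < β)
    (hN : N = (Icc 1 c).sup' (Finset.nonempty_Icc.mpr hc) (fun y => ‖z y‖))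
    (A : ℕ → ℕ → ℝ)
    (hA_nonneg : ∀ k j, 0 ≤ A k j)
    (hA_tri : ∀ k j, k < j → A k j = 0)
    (hA_row : ∀ k ∈ Icc 1 n, ∑ j ∈ Icc 1 k, A k j = 1)
    (hA_nice : ∀ k ∈ Icc 1 n, ∀ j ∈ Icc 1 k,
      ∑ i ∈ Icc 1 j, A k i ≤ ψ * j / k)
    (hrefl1 : ∀ k ∈ Icc 1 n, c < k → ∀ j ∈ Icc 1 k, 0 < A k j → x j ∈ f (x k))
    (hrefl2 : ∀ k ∈ Icc 1 n, ∀ y ∈ f (x k),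
      |(∑ j ∈ (Icc 1 k).filter (fun j => x j = y), A k j) -
          (((Icc 1 k).filter (fun j => x j = y)).card : ℝ) /
            ∑ y' ∈ f (x k), (((Icc 1 k).filter (fun j => x j = y')).card : ℝ)|
        ≤ ψ / Real.sqrt k)
    (hfreq : ∀ k ∈ Icc 1 n, ∀ x' ∈ Icc 1 c, ∀ y ∈ f x',
      |(((Icc 1 k).filter (fun j => x j = y)).card : ℝ) /
          (∑ y' ∈ f x', (((Icc 1 k).filter (fun j => x j = y')).card : ℝ)) -
          π y / ∑ y' ∈ f x', π y'|
        ≤ β / Real.sqrt k)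
    (hgood : ∀ k ∈ Icc 1 n, ‖v k - z (x k)‖ ≤ γ / Real.sqrt k) :
    ∀ k ∈ Icc 1 n,
      ‖(∑ j ∈ Icc 1 k, A k j • v j) -
          (∑ y ∈ f (x k), π y)⁻¹ • ∑ y ∈ f (x k), π y • z y‖ ≤
        (2 * ψ * γ + N * c * ψ + N * c * β + (c + 1) ^ 2 * ψ * (γ + N)) /
          Real.sqrt k :=
  attention_reflecting_setvalued_good_sequence_general n c d hc x hx π hπ f hf_sub hf_ne v z γ ψ N β
    hγ hβ hN A hA_nonneg hA_row hA_nice hrefl1 hrefl2 hfreq hgood
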